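/- DL-Lite_FR is not closed under KB contraction for any of the eight model-based semantics X^y_z with X ∈ {glob, loc}, y ∈ {atoms, symbols}, z ∈ {⊆, ♯}: for K = {Priest ⊑ Cleric, Cleric ⊑ Renter} (a DL-Lite_core KB) and the single DL-Lite_core TBox assertion N = {Priest ⊑ Renter}, the set of interpretations K ⊖ N obtained by contraction under X^y_z is not equal to Mod(K') for any DL-Lite_FR KB K'. -/

import Mathlib

namespace DLLite

/-- The countably infinite domain of constants. -/
abbrev Δ : Type := ℕ
/-- Countably infinite set of concept names. -/
abbrev ConceptName : Type := ℕ
/-- Countably infinite set of role names. -/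
abbrev RoleName : Type := ℕ

/-- An interpretation assigns a set of domain elements to each concept name
and a binary relation to each role name; constants are interpreted as themselves. -/
structure Interp where
  concept : ConceptName → Set Δ
  role : RoleName → Set (Δ × Δ)

/-- Basic roles: `P` or `P⁻`. -/
inductive BasicRole where
  | pos (P : RoleName)
  | inv (P : RoleName)
deriving DecidableEq

def BasicRole.interp (R : BasicRole) (I : Interp) : Set (Δ × Δ) :=
  match R with
  | .pos P => I.role P
  | .inv P => {p | (p.2, p.1) ∈ I.role P}

/-- Basic concepts: `A` or `∃R`. -/
inductive BasicConcept where
  | atom (A : ConceptName)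
  | ex (R : BasicRole)
deriving DecidableEq

def BasicConcept.interp (B : BasicConcept) (I : Interp) : Set Δ :=
  match B with
  | .atom A => I.concept A
  | .ex R => {o | ∃ o', (o, o') ∈ R.interp I}

/-- DL-Lite_FR assertions: (negative) concept/role inclusions, functionality
assertions, and membership assertions. -/
inductive Assertion where
  | conceptIncl (B1 B2 : BasicConcept)
  | conceptDisj (B1 B2 : BasicConcept)
  | roleIncl (R1 R2 : BasicRole)
  | roleDisj (R1 R2 : BasicRole)
  | funct (R : BasicRole)
  | memberC (A : ConceptName) (a : Δ)
  | memberR (P : RoleName) (a b : Δ)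
deriving DecidableEq

/-- Satisfaction of an assertion by an interpretation. -/
def Interp.sat (I : Interp) : Assertion → Prop
  | .conceptIncl B1 B2 => B1.interp I ⊆ B2.interp I
  | .conceptDisj B1 B2 => B1.interp I ∩ B2.interp I = ∅
  | .roleIncl R1 R2 => R1.interp I ⊆ R2.interp I
  | .roleDisj R1 R2 => R1.interp I ∩ R2.interp I = ∅
  | .funct R => ∀ o o1 o2, (o, o1) ∈ R.interp I → (o, o2) ∈ R.interp I → o1 = o2
  | .memberC A a => a ∈ I.concept A
  | .memberR P a b => (a, b) ∈ I.role P

/-- TBox assertions: inclusion or functionality assertions. -/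
def Assertion.isTBox : Assertion → Prop
  | .memberC _ _ => False
  | .memberR _ _ _ => False
  | _ => True

/-- Membership (ABox) assertions. -/
def Assertion.isMembership : Assertion → Prop
  | .memberC _ _ => True
  | .memberR _ _ _ => True
  | _ => False

/-- The constants occurring in an assertion. -/
def Assertion.constants : Assertion → Set Δ
  | .memberC _ a => {a}
  | .memberR _ a b => {a, b}
  | _ => ∅

/-- A knowledge base: a finite set of assertions (TBox ∪ ABox). -/
abbrev KB := Finset Assertion

/-- The set of models of a KB. -/
def Mod (K : KB) : Set Interp := {I | ∀ a ∈ K, I.sat a}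

/-- Interpretations falsifying at least one assertion of `K`. -/
def NonMod (K : KB) : Set Interp := {I | ∃ a ∈ K, ¬ I.sat a}

/-- The constants occurring in a KB. -/
def KB.constants (K : KB) : Set Δ := ⋃ a ∈ K, Assertion.constants a

/-- Atoms: ground facts `A(o)` or `P(o,o')`. -/
inductive Atom where
  | c (A : ConceptName) (o : Δ)
  | r (P : RoleName) (o o' : Δ)
deriving DecidableEq

/-- The atom set of an interpretation. -/
def Interp.atoms (I : Interp) : Set Atom :=
  fun a => match a with
  | .c A o => o ∈ I.concept A
  | .r P o o' => (o, o') ∈ I.role P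

/-- Concept or role names (symbols). -/
inductive SName where
  | c (A : ConceptName)
  | r (P : RoleName)
deriving DecidableEq

/-- Atom-based set distance: symmetric difference of atom sets. -/
def distASub (I J : Interp) : Set Atom := symmDiff I.atoms J.atoms
/-- Atom-based cardinality distance. -/
noncomputable def distACard (I J : Interp) : ℕ∞ := (symmDiff I.atoms J.atoms).encard
/-- Symbol-based set distance: names interpreted differently. -/
def distSSub (I J : Interp) : Set SName :=
  fun n => match n with
  | .c A => I.concept A ≠ J.concept A
  | .r P => I.role P ≠ J.role P
/-- Symbol-based cardinality distance. -/
noncomputable def distSCard (I J : Interp) : ℕ∞ := (distSSub I J).encard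

/-- Global expansion w.r.t. a distance. -/
def expGlobD {D : Type} [PartialOrder D] (dist : Interp → Interp → D)
    (M N : Set Interp) : Set Interp :=
  {J | J ∈ N ∧ ∃ I ∈ M, ∀ I' ∈ M, ∀ J' ∈ N, ¬ dist I' J' < dist I J}

/-- Local expansion w.r.t. a distance. -/
def expLocD {D : Type} [PartialOrder D] (dist : Interp → Interp → D)
    (M N : Set Interp) : Set Interp :=
  {J | J ∈ N ∧ ∃ I ∈ M, ∀ J' ∈ N, ¬ dist I J' < dist I J}

inductive LocKind | glob | loc
inductive MeasKind | atoms | symbols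
inductive OrdKind | subset | card

/-- The expansion operator on sets of interpretations for each of the
eight model-based semantics `X^y_z`. -/
def expansionSet : LocKind → MeasKind → OrdKind → Set Interp → Set Interp → Set Interp
  | .glob, .atoms, .subset => expGlobD distASub
  | .glob, .atoms, .card => expGlobD distACard
  | .glob, .symbols, .subset => expGlobD distSSub
  | .glob, .symbols, .card => expGlobD distSCard
  | .loc, .atoms, .subset => expLocD distASub
  | .loc, .atoms, .card => expLocD distACard
  | .loc, .symbols, .subset => expLocD distSSub
  | .loc, .symbols, .card => expLocD distSCard

/-- KB expansion `K ⊕ N` under semantics `X^y_z`. -/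
def expandKB (X : LocKind) (y : MeasKind) (z : OrdKind) (K N : KB) : Set Interp :=
  expansionSet X y z (Mod K) (Mod N)

/-- KB contraction `K ⊖ N` under semantics `X^y_z`. -/
def contractKB (X : LocKind) (y : MeasKind) (z : OrdKind) (K N : KB) : Set Interp :=
  Mod K ∪ expansionSet X y z (Mod K) (NonMod N)

/-- Union of two interpretations. -/
def Interp.union (I1 I2 : Interp) : Interp :=
  ⟨fun A => I1.concept A ∪ I2.concept A, fun P => I1.role P ∪ I2.role P⟩

/-- The support set of an interpretation. -/
def Interp.support (I : Interp) : Set Δ :=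
  (⋃ A, I.concept A) ∪ (⋃ P, {o | ∃ o', (o, o') ∈ I.role P ∨ (o', o) ∈ I.role P})

/-- The image `I^f` of an interpretation under an (injective) map `f`. -/
def Interp.image (I : Interp) (f : Δ → Δ) : Interp :=
  ⟨fun A => f '' I.concept A, fun P => (fun p => (f p.1, f p.2)) '' I.role P⟩

/-- `h` is a homomorphism from `I` to `J`. -/
def IsHom (h : Δ → Δ) (I J : Interp) : Prop :=
  (∀ A, h '' I.concept A ⊆ J.concept A) ∧
  (∀ P o o', (o, o') ∈ I.role P → (h o, h o') ∈ J.role P)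

end DLLite

namespace DLLite

def Priest : ConceptName := 0
def Cleric : ConceptName := 1
def Renter : ConceptName := 2

/-- K = {Priest ⊑ Cleric, Cleric ⊑ Renter}, a DL-Lite_core KB with empty ABox. -/
def Kcon : KB :=
  { .conceptIncl (.atom Priest) (.atom Cleric),
    .conceptIncl (.atom Cleric) (.atom Renter) }

/-- N = {Priest ⊑ Renter}, a single DL-Lite_core TBox assertion. -/
def Ncon : KB := { .conceptIncl (.atom Priest) (.atom Renter) }

/-!
With no role edges every `∃R` is empty, so an assertion true in such an interpretation and in
any other one stays true in their intersection: DL-Lite_FR assertions then act like Horn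
clauses. Hence `Mod K'` is closed under intersecting with a role-free member. Now look at
one-point interpretations, named by the concepts containing the point. `{Cleric, Renter}` is a
model of `K`. `{Priest, Cleric}` violates `N` and lies one atom (one symbol) away from the model
`{Priest, Cleric, Renter}`; as no model of `K` violates `N`, no smaller distance occurs, so it lies
in every expansion, global or local. Both are in the contraction, but their intersection
`{Cleric}` satisfies `N` and violates `K`, so it is not.
-/

def Interp.inter (I J : Interp) : Interp :=
  ⟨fun A => I.concept A ∩ J.concept A, fun P => I.role P ∩ J.role P⟩

theorem BasicRole.interp_inter (R : BasicRole) (I J : Interp) :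
    R.interp (I.inter J) = R.interp I ∩ R.interp J := by
  cases R <;> rfl

theorem BasicConcept.interp_ex_eq_empty_of_role_eq_empty (R : BasicRole) {I : Interp}
    (hI : ∀ P, I.role P = ∅) : (BasicConcept.ex R).interp I = ∅ := by
  cases R <;> simp [BasicConcept.interp, BasicRole.interp, hI]

theorem BasicConcept.interp_inter_of_role_eq_empty (B : BasicConcept) {I : Interp}
    (J : Interp) (hI : ∀ P, I.role P = ∅) :
    B.interp (I.inter J) = B.interp I ∩ B.interp J := by
  cases B with
  | atom A => rfl
  | ex R =>
    have hIJ : ∀ P, (I.inter J).role P = ∅ := fun P => by simp [Interp.inter, hI]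
    rw [interp_ex_eq_empty_of_role_eq_empty R hI, interp_ex_eq_empty_of_role_eq_empty R hIJ,
      Set.empty_inter]

theorem Interp.sat_inter {I : Interp} (J : Interp) (hI : ∀ P, I.role P = ∅)
    {α : Assertion} (hαI : I.sat α) (hαJ : J.sat α) : (I.inter J).sat α := by
  cases α with
  | conceptIncl B1 B2 =>
    simp only [Interp.sat, BasicConcept.interp_inter_of_role_eq_empty _ J hI] at *
    exact Set.inter_subset_inter hαI hαJ
  | conceptDisj B1 B2 =>
    simp only [Interp.sat, BasicConcept.interp_inter_of_role_eq_empty _ J hI] at *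
    exact Set.subset_eq_empty (Set.inter_subset_inter Set.inter_subset_left
      Set.inter_subset_left) hαI
  | roleIncl R1 R2 =>
    simp only [Interp.sat, BasicRole.interp_inter] at *
    exact Set.inter_subset_inter hαI hαJ
  | roleDisj R1 R2 =>
    simp only [Interp.sat, BasicRole.interp_inter] at *
    exact Set.subset_eq_empty (Set.inter_subset_inter Set.inter_subset_left
      Set.inter_subset_left) hαI
  | funct R =>
    simp only [Interp.sat, BasicRole.interp_inter] at *
    exact fun o o1 o2 h1 h2 => hαI o o1 o2 h1.1 h2.1
  | memberC A a => exact ⟨hαI, hαJ⟩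
  | memberR P a b => exact ⟨hαI, hαJ⟩

theorem inter_mem_Mod {K : KB} {I J : Interp} (hI : I ∈ Mod K) (hJ : J ∈ Mod K)
    (hIrole : ∀ P, I.role P = ∅) : I.inter J ∈ Mod K :=
  fun α hα => Interp.sat_inter J hIrole (hI α hα) (hJ α hα)

theorem Interp.mem_atoms_c {I : Interp} {A : ConceptName} {o : Δ} :
    Atom.c A o ∈ I.atoms ↔ o ∈ I.concept A := Iff.rfl

theorem Interp.mem_atoms_r {I : Interp} {P : RoleName} {o o' : Δ} :
    Atom.r P o o' ∈ I.atoms ↔ (o, o') ∈ I.role P := Iff.rfl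

theorem mem_distSSub_c {I J : Interp} {A : ConceptName} :
    SName.c A ∈ distSSub I J ↔ I.concept A ≠ J.concept A := Iff.rfl

theorem mem_distSSub_r {I J : Interp} {P : RoleName} :
    SName.r P ∈ distSSub I J ↔ I.role P ≠ J.role P := Iff.rfl

theorem eq_of_atoms_eq {I J : Interp} (h : I.atoms = J.atoms) : I = J := by
  obtain ⟨c1, r1⟩ := I
  obtain ⟨c2, r2⟩ := J
  congr
  · exact funext fun A => Set.ext fun o => iff_of_eq (congrFun h (.c A o))
  · exact funext fun P => Set.ext fun p => iff_of_eq (congrFun h (.r P p.1 p.2))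

theorem eq_of_distASub_eq_empty {I J : Interp} (h : distASub I J = ∅) : I = J :=
  eq_of_atoms_eq (symmDiff_eq_bot.mp h)

theorem eq_of_distSSub_eq_empty {I J : Interp} (h : distSSub I J = ∅) : I = J := by
  obtain ⟨c1, r1⟩ := I
  obtain ⟨c2, r2⟩ := J
  congr
  · funext A
    by_contra hne
    exact Set.eq_empty_iff_forall_notMem.mp h (.c A) hne
  · funext P
    by_contra hne
    exact Set.eq_empty_iff_forall_notMem.mp h (.r P) hne

theorem eq_of_distASub_lt_singleton {I J : Interp} {a : Atom} (h : distASub I J < {a}) :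
    I = J :=
  eq_of_distASub_eq_empty (Set.ssubset_singleton_iff.mp h)

theorem eq_of_distSSub_lt_singleton {I J : Interp} {n : SName} (h : distSSub I J < {n}) :
    I = J :=
  eq_of_distSSub_eq_empty (Set.ssubset_singleton_iff.mp h)

theorem eq_of_distACard_lt_one {I J : Interp} (h : distACard I J < 1) : I = J :=
  eq_of_distASub_eq_empty (Set.encard_eq_zero.mp (Order.lt_one_iff.mp h))

theorem eq_of_distSCard_lt_one {I J : Interp} (h : distSCard I J < 1) : I = J :=
  eq_of_distSSub_eq_empty (Set.encard_eq_zero.mp (Order.lt_one_iff.mp h))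

section Expansion

variable {D : Type} [PartialOrder D] (dist : Interp → Interp → D) {M N : Set Interp}

theorem expGlobD_subset_expLocD : expGlobD dist M N ⊆ expLocD dist M N :=
  fun _ ⟨hJ, I, hI, hmin⟩ => ⟨hJ, I, hI, hmin I hI⟩

theorem mem_expGlobD_of_disjoint (hMN : Disjoint M N) {I J : Interp} (hI : I ∈ M)
    (hJ : J ∈ N) (hmin : ∀ I' J', dist I' J' < dist I J → I' = J') :
    J ∈ expGlobD dist M N :=
  ⟨hJ, I, hI, fun I' hI' J' hJ' hlt =>
    Set.disjoint_left.mp hMN hI' (hmin I' J' hlt ▸ hJ')⟩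

end Expansion

theorem expansionSet_subset (X : LocKind) (y : MeasKind) (z : OrdKind) (M N : Set Interp) :
    expansionSet X y z M N ⊆ N := by
  cases X <;> cases y <;> cases z <;> exact fun _ hJ => hJ.1

def singletonInterp (S : Set ConceptName) : Interp :=
  ⟨fun A => {o | A ∈ S ∧ o = 0}, fun _ => ∅⟩

theorem mem_singletonInterp_concept {S : Set ConceptName} {A : ConceptName} {o : Δ} :
    o ∈ (singletonInterp S).concept A ↔ A ∈ S ∧ o = 0 := Iff.rfl

theorem singletonInterp_concept_eq_iff {S T : Set ConceptName} {A : ConceptName} :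
    (singletonInterp S).concept A = (singletonInterp T).concept A ↔ (A ∈ S ↔ A ∈ T) := by
  simp [singletonInterp, Set.ext_iff]

theorem singletonInterp_inter (S T : Set ConceptName) :
    (singletonInterp S).inter (singletonInterp T) = singletonInterp (S ∩ T) := by
  simp only [Interp.inter, singletonInterp, Set.inter_self]
  congr
  funext A
  ext o
  simp only [Set.mem_inter_iff, Set.mem_ofPred_eq]
  tauto

theorem singletonInterp_concept_subset_iff (S : Set ConceptName) (A B : ConceptName) :
    (singletonInterp S).concept A ⊆ (singletonInterp S).concept B ↔ (A ∈ S → B ∈ S) := by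
  simp only [singletonInterp, Set.ofPred_subset_ofPred, and_imp]
  exact ⟨fun h hA => (h 0 hA rfl).1, fun h _ hA ho => ⟨h hA, ho⟩⟩

theorem distASub_singletonInterp (S T : Set ConceptName) :
    distASub (singletonInterp S) (singletonInterp T) = (Atom.c · 0) '' symmDiff S T := by
  ext a
  cases a with
  | c A o =>
    simp only [distASub, Set.mem_symmDiff, Interp.mem_atoms_c, mem_singletonInterp_concept,
      Set.mem_image, Atom.c.injEq]
    aesop
  | r P o o' => simp [distASub, Set.mem_symmDiff, Interp.mem_atoms_r, singletonInterp]

theorem distSSub_singletonInterp (S T : Set ConceptName) :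
    distSSub (singletonInterp S) (singletonInterp T) = SName.c '' symmDiff S T := by
  ext n
  cases n with
  | c A =>
    simp only [mem_distSSub_c, ne_eq, singletonInterp_concept_eq_iff, Set.mem_image,
      SName.c.injEq, exists_eq_right, Set.mem_symmDiff]
    tauto
  | r P => simp [mem_distSSub_r, singletonInterp]

theorem mem_Mod_Kcon_iff (I : Interp) :
    I ∈ Mod Kcon ↔
      I.concept Priest ⊆ I.concept Cleric ∧ I.concept Cleric ⊆ I.concept Renter := by
  simp [Mod, Kcon, Interp.sat, BasicConcept.interp]

theorem mem_NonMod_Ncon_iff (I : Interp) :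
    I ∈ NonMod Ncon ↔ ¬ I.concept Priest ⊆ I.concept Renter := by
  simp [NonMod, Ncon, Interp.sat, BasicConcept.interp]

theorem disjoint_Mod_Kcon_NonMod_Ncon : Disjoint (Mod Kcon) (NonMod Ncon) := by
  refine Set.disjoint_left.mpr fun I hK hN => ?_
  rw [mem_Mod_Kcon_iff] at hK
  exact (mem_NonMod_Ncon_iff I).mp hN (hK.1.trans hK.2)

theorem singletonInterp_mem_expansionSet (X : LocKind) (y : MeasKind) (z : OrdKind) :
    singletonInterp {Priest, Cleric} ∈
      expansionSet X y z (Mod Kcon) (NonMod Ncon) := by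
  set M := singletonInterp {Priest, Cleric, Renter}
  set W := singletonInterp {Priest, Cleric}
  have hM : M ∈ Mod Kcon := by
    simp [M, mem_Mod_Kcon_iff, singletonInterp_concept_subset_iff]
  have hW : W ∈ NonMod Ncon := by
    simp [W, mem_NonMod_Ncon_iff, singletonInterp_concept_subset_iff, Priest, Renter, Cleric]
  have hsymmDiff :
      symmDiff {Priest, Cleric, Renter} {Priest, Cleric} = ({Renter} : Set ConceptName) := by
    ext A
    simp only [Set.mem_symmDiff, Set.mem_insert_iff, Set.mem_singleton_iff, Priest, Cleric,
      Renter]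
    grind
  have hA : distASub M W = {Atom.c Renter 0} := by
    rw [distASub_singletonInterp, hsymmDiff, Set.image_singleton]
  have hS : distSSub M W = {SName.c Renter} := by
    rw [distSSub_singletonInterp, hsymmDiff, Set.image_singleton]
  have hAC : distACard M W = 1 := by
    rw [distACard, ← distASub, hA, Set.encard_singleton]
  have hSC : distSCard M W = 1 := by
    rw [distSCard, hS, Set.encard_singleton]
  have glob {D : Type} [PartialOrder D] (dist : Interp → Interp → D)
      (hmin : ∀ I J, dist I J < dist M W → I = J) :
      W ∈ expGlobD dist (Mod Kcon) (NonMod Ncon) :=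
    mem_expGlobD_of_disjoint dist disjoint_Mod_Kcon_NonMod_Ncon hM hW hmin
  have gA := glob distASub fun I J h => eq_of_distASub_lt_singleton (hA ▸ h)
  have gAC := glob distACard fun I J h => eq_of_distACard_lt_one (hAC ▸ h)
  have gS := glob distSSub fun I J h => eq_of_distSSub_lt_singleton (hS ▸ h)
  have gSC := glob distSCard fun I J h => eq_of_distSCard_lt_one (hSC ▸ h)
  cases X <;> cases y <;> cases z
  exacts [gA, gAC, gS, gSC, expGlobD_subset_expLocD _ gA, expGlobD_subset_expLocD _ gAC,
    expGlobD_subset_expLocD _ gS, expGlobD_subset_expLocD _ gSC]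

/-- DL-Lite_FR is not closed under KB contraction for any of the eight
model-based semantics `X^y_z`. -/
theorem kb_contraction_inexpressible (X : LocKind) (y : MeasKind) (z : OrdKind) :
    ¬ ∃ K' : KB, contractKB X y z Kcon Ncon = Mod K' := by
  rintro ⟨K', hK'⟩
  have hD : singletonInterp {Cleric} ∉ contractKB X y z Kcon Ncon := by
    rintro (hK | hN)
    · simp [mem_Mod_Kcon_iff, singletonInterp_concept_subset_iff, Cleric, Renter] at hK
    · have := expansionSet_subset X y z _ _ hN
      simp [mem_NonMod_Ncon_iff, singletonInterp_concept_subset_iff, Cleric, Priest] at this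
  have hW1 : singletonInterp {Cleric, Renter} ∈ Mod K' := by
    rw [← hK']
    left
    simp [mem_Mod_Kcon_iff, singletonInterp_concept_subset_iff, Cleric, Priest]
  have hW2 : singletonInterp {Priest, Cleric} ∈ Mod K' :=
    hK' ▸ Or.inr (singletonInterp_mem_expansionSet X y z)
  have hCleric : ({Cleric, Renter} ∩ {Priest, Cleric} : Set ConceptName) = {Cleric} := by
    ext A
    simp only [Set.mem_inter_iff, Set.mem_insert_iff, Set.mem_singleton_iff, Priest, Cleric,
      Renter]
    grind
  have hinter := inter_mem_Mod hW1 hW2 fun _ => rfl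
  rw [singletonInterp_inter, hCleric, ← hK'] at hinter
  exact hD hinter

end DLLite
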